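/- arXiv:2508.08337 — 4 statements merged into one kernel-verified Lean document; each statement's English description precedes it below -/
import Mathlib

section
/- Let F_poor be the CDF of the Gamma distribution with shape a_p > 0 and rate r_p > 0, and F_rich the CDF of the Gamma distribution with shape a_r > 0 and rate r_r > 0 (in Mathlib, F_poor = gammaCDFReal a_p r_p and F_rich = gammaCDFReal a_r r_r), and assume the rich region's CDF dominates the poor region's: F_rich(q) ≥ F_poor(q) for all q ≥ 0. Let n_a, n_a' > 0 be the total numbers of URM and non-URM applicants, n = n_a + n_a', let 0 < g < n be the number of selective-admission spots, let η ∈ [1, n/n_a) be the quota weighting coefficient, and set η' = (n − η·n_a)/n_a' (so that the non-URM spots are η'·(n_a'/n)·g). Suppose thresholds q1, q2, q3, q4 ≥ 0 satisfy the quota equations F_poor(q1) = F_rich(q2) = g·η/n and F_poor(q3) = F_rich(q4) = g·η'/n. If for every q > 0 one has F_rich(q)·(n_a·(1−η) + n_a') < F_poor(q)·n_a'·η (equivalently, the supremum of F_rich(q)/F_poor(q) over q > 0 is strictly below n_a'·η/(n_a·(1−η) + n_a')), then q3 < q2: the quota-based admission imposes a strictly more competitive score threshold on non-URM applicants from the poor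 region than on URM applicants from the rich region. -/
open ProbabilityTheory

namespace ProbabilityTheory

/-- CDF of the gamma distribution (removed from Mathlib; restored with its old definition). -/
noncomputable
def gammaCDFReal (a r : ℝ) : StieltjesFunction ℝ :=
  cdf (gammaMeasure a r)

end ProbabilityTheory

lemma gammaCDFReal_zero_aux (a r : ℝ) (ha : 0 < a) (hr : 0 < r) :
    gammaCDFReal a r 0 = 0 := by
  have gammaCDFReal_eq_lintegral : ∀ x, gammaCDFReal a r x =
      ENNReal.toReal (∫⁻ t in Set.Iic x, gammaPDF a r t) := by
    intro x
    have := isProbabilityMeasure_gammaMeasure ha hr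
    rw [gammaCDFReal, cdf_eq_real, gammaMeasure, MeasureTheory.measureReal_def,
      MeasureTheory.withDensity_apply _ measurableSet_Iic]
  rw [gammaCDFReal_eq_lintegral,
    lintegral_Iic_eq_lintegral_Iio_add_Icc _ le_rfl, lintegral_gammaPDF_of_nonpos le_rfl,
    Set.Icc_self]
  rw [MeasureTheory.setLIntegral_measure_zero _ _ (by simp)]
  simp

/-- Theorem 1 (quota-based admission incurs unfairness w.r.t. non-URM in poor region),
stated with the condition (1) in contrapositive form. -/
theorem quota_based_admission_unfair
    (a_p r_p a_r r_r : ℝ) (hap : 0 < a_p) (hrp : 0 < r_p) (har : 0 < a_r) (hrr : 0 < r_r)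
    (hdom : ∀ q : ℝ, 0 ≤ q → gammaCDFReal a_p r_p q ≤ gammaCDFReal a_r r_r q)
    (na na' n g : ℝ) (hna : 0 < na) (hna' : 0 < na') (hn : n = na + na')
    (hg0 : 0 < g) (hgn : g < n)
    (η : ℝ) (hη1 : 1 ≤ η) (hη2 : η < n / na)
    (η' : ℝ) (hη' : η' = (n - η * na) / na')
    (q1 q2 q3 q4 : ℝ) (hq1 : 0 ≤ q1) (hq2 : 0 ≤ q2) (hq3 : 0 ≤ q3) (hq4 : 0 ≤ q4)
    (heq1 : gammaCDFReal a_p r_p q1 = g * η / n)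
    (heq2 : gammaCDFReal a_r r_r q2 = g * η / n)
    (heq3 : gammaCDFReal a_p r_p q3 = g * η' / n)
    (heq4 : gammaCDFReal a_r r_r q4 = g * η' / n)
    (hratio : ∀ q : ℝ, 0 < q →
      gammaCDFReal a_r r_r q * (na * (1 - η) + na') < gammaCDFReal a_p r_p q * (na' * η)) :
    q3 < q2 := by
  have hnpos : 0 < n := by rw [hn]; positivity
  have hq2pos : 0 < q2 := by
    rcases lt_or_eq_of_le hq2 with h | h
    · exact h
    · exfalso
      rw [← h, gammaCDFReal_zero_aux a_r r_r har hrr] at heq2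
      have : 0 < g * η / n := by positivity
      linarith
  have hkey := hratio q2 hq2pos
  rw [heq2] at hkey
  -- F_poor q3 * (na' * η) = (g*η/n) * (na*(1-η)+na')
  have hrw : gammaCDFReal a_p r_p q3 * (na' * η) = g * η / n * (na * (1 - η) + na') := by
    rw [heq3, hη', hn]
    field_simp
    ring
  have h3 : gammaCDFReal a_p r_p q3 < gammaCDFReal a_p r_p q2 := by
    have h := hkey
    rw [← hrw] at h
    have hpos : 0 < na' * η := by positivity
    exact lt_of_mul_lt_mul_right h hpos.le
  by_contra hcon
  push_neg at hcon
  exact absurd ((gammaCDFReal a_p r_p).mono hcon) (not_le.mpr h3)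
end

section
/- Let k > 0 and 0 < r_poor < r_rich, set F_poor = gammaCDFReal k r_poor and F_rich = gammaCDFReal k r_rich, and let q̃ = k·ln(r_rich/r_poor)/(r_rich − r_poor) be the intersection point of the two densities. Let n_a^poor, n_a^rich, n_a'^poor, n_a'^rich > 0 be the region- and group-specific applicant counts and g > 0 the number of selective-admission spots. Suppose the default threshold q_o > 0 satisfies (n_a^poor + n_a'^poor)·F_poor(q_o) + (n_a^rich + n_a'^rich)·F_rich(q_o) = g and that scarcity holds: q_o < q̃. Let the plus factor η satisfy q_o·(r_rich − r_poor)/(k·ln(r_rich/r_poor)) ≤ η < 1, and suppose the plus-factor threshold q_† ≥ 0 satisfies n_a^poor·F_poor(q_†/η) + n_a^rich·F_rich(q_†/η) + n_a'^poor·F_poor(q_†) + n_a'^rich·F_rich(q_†) = g. Then F_rich(q_†/η) − F_rich(q_o) > F_poor(q_†/η) − F_poor(q_o): the increase in selective-admission probability for URM applicants from the rich region strictly exceeds that for URM applicants from the poor region. -/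
open ProbabilityTheory MeasureTheory Real Set
open scoped ENNReal NNReal

private lemma my_integrable_gammaPDFReal {a r : ℝ} (ha : 0 < a) (hr : 0 < r) :
    Integrable (gammaPDFReal a r) := by
  refine ⟨(measurable_gammaPDFReal a r).aestronglyMeasurable, ?_⟩
  have h : (fun x => ‖gammaPDFReal a r x‖ₑ) = gammaPDF a r := by
    funext x
    rw [gammaPDF, Real.enorm_eq_ofReal (gammaPDFReal_nonneg ha hr x)]
  rw [HasFiniteIntegral, h, lintegral_gammaPDF_eq_one ha hr]
  exact ENNReal.one_lt_top

private lemma gammaCDFReal_sub {a r : ℝ} (ha : 0 < a) (hr : 0 < r) {x y : ℝ} (hxy : x ≤ y) :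
    gammaCDFReal a r y - gammaCDFReal a r x = ∫ t in Ioc x y, gammaPDFReal a r t := by
  rw [gammaCDFReal, cdf_gammaMeasure_eq_integral ha hr, cdf_gammaMeasure_eq_integral ha hr,
    ← Iic_union_Ioc_eq_Iic hxy,
    setIntegral_union (Iic_disjoint_Ioc le_rfl) measurableSet_Ioc
      ((my_integrable_gammaPDFReal ha hr).integrableOn)
      ((my_integrable_gammaPDFReal ha hr).integrableOn)]
  ring

private lemma gammaCDFReal_strict {a r : ℝ} (ha : 0 < a) (hr : 0 < r) {x y : ℝ}
    (hx : 0 ≤ x) (hxy : x < y) : gammaCDFReal a r x < gammaCDFReal a r y := by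
  have h := gammaCDFReal_sub ha hr hxy.le
  have hpos : 0 < ∫ t in Ioc x y, gammaPDFReal a r t := by
    rw [setIntegral_pos_iff_support_of_nonneg_ae
      (ae_of_all _ fun t => gammaPDFReal_nonneg ha hr t)
      ((my_integrable_gammaPDFReal ha hr).integrableOn)]
    have hsub : Ioc x y ⊆ Function.support (gammaPDFReal a r) ∩ Ioc x y := fun t ht =>
      ⟨(gammaPDFReal_pos ha hr (lt_of_le_of_lt hx ht.1)).ne', ht⟩
    calc (0 : ℝ≥0∞) < ENNReal.ofReal (y - x) := ENNReal.ofReal_pos.mpr (by linarith)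
      _ = volume (Ioc x y) := (Real.volume_Ioc).symm
      _ ≤ _ := measure_mono hsub
  linarith

private lemma gammaPDFReal_lt {k r_poor r_rich : ℝ} (hk : 0 < k) (hrp : 0 < r_poor)
    (hlt : r_poor < r_rich) {x : ℝ} (hx0 : 0 < x)
    (hx : x < k * Real.log (r_rich / r_poor) / (r_rich - r_poor)) :
    gammaPDFReal k r_poor x < gammaPDFReal k r_rich x := by
  have hrr : 0 < r_rich := hrp.trans hlt
  have hsub : 0 < r_rich - r_poor := by linarith
  have hG : 0 < Real.Gamma k := Real.Gamma_pos_of_pos hk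
  have hxk : 0 < x ^ (k - 1) := Real.rpow_pos_of_pos hx0 _
  have hx' : x * (r_rich - r_poor) < k * Real.log (r_rich / r_poor) :=
    (lt_div_iff₀ hsub).mp hx
  have hlog : Real.log (r_rich / r_poor) = Real.log r_rich - Real.log r_poor :=
    Real.log_div hrr.ne' hrp.ne'
  have key : r_poor ^ k * Real.exp (-(r_poor * x)) < r_rich ^ k * Real.exp (-(r_rich * x)) := by
    rw [← Real.log_lt_log_iff (mul_pos (Real.rpow_pos_of_pos hrp k) (Real.exp_pos _))
        (mul_pos (Real.rpow_pos_of_pos hrr k) (Real.exp_pos _)),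
      Real.log_mul (Real.rpow_pos_of_pos hrp k).ne' (Real.exp_ne_zero _),
      Real.log_mul (Real.rpow_pos_of_pos hrr k).ne' (Real.exp_ne_zero _),
      Real.log_rpow hrp, Real.log_rpow hrr,
      Real.log_exp, Real.log_exp]
    nlinarith [hx', hlog]
  have h2 := mul_lt_mul_of_pos_right key (div_pos hxk hG)
  simp only [gammaPDFReal, if_pos hx0.le]
  calc r_poor ^ k / Real.Gamma k * x ^ (k - 1) * Real.exp (-(r_poor * x))
      = r_poor ^ k * Real.exp (-(r_poor * x)) * (x ^ (k - 1) / Real.Gamma k) := by ring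
    _ < r_rich ^ k * Real.exp (-(r_rich * x)) * (x ^ (k - 1) / Real.Gamma k) := h2
    _ = r_rich ^ k / Real.Gamma k * x ^ (k - 1) * Real.exp (-(r_rich * x)) := by ring

/-- Theorem 2: holistic review with plus factors benefits URM applicants from the rich
region more than those from the poor region. -/
theorem plus_factor_benefits_rich_region_more
    (k r_poor r_rich : ℝ) (hk : 0 < k) (hrp : 0 < r_poor) (hlt : r_poor < r_rich)
    (napoor narich nbpoor nbrich g : ℝ)
    (hnapoor : 0 < napoor) (hnarich : 0 < narich)
    (hnbpoor : 0 < nbpoor) (hnbrich : 0 < nbrich) (hg : 0 < g)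
    (qo : ℝ) (hqo : 0 < qo)
    (hdefault : (napoor + nbpoor) * gammaCDFReal k r_poor qo
      + (narich + nbrich) * gammaCDFReal k r_rich qo = g)
    (hscarce : qo < k * Real.log (r_rich / r_poor) / (r_rich - r_poor))
    (η : ℝ) (hηlo : qo * (r_rich - r_poor) / (k * Real.log (r_rich / r_poor)) ≤ η)
    (hη1 : η < 1)
    (qd : ℝ) (hqd : 0 ≤ qd)
    (hplus : napoor * gammaCDFReal k r_poor (qd / η)
      + narich * gammaCDFReal k r_rich (qd / η)
      + nbpoor * gammaCDFReal k r_poor qd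
      + nbrich * gammaCDFReal k r_rich qd = g) :
    gammaCDFReal k r_rich (qd / η) - gammaCDFReal k r_rich qo
      > gammaCDFReal k r_poor (qd / η) - gammaCDFReal k r_poor qo := by
  have hrr : 0 < r_rich := hrp.trans hlt
  have hsub : 0 < r_rich - r_poor := by linarith
  have hL : 0 < Real.log (r_rich / r_poor) :=
    Real.log_pos ((one_lt_div hrp).mpr hlt)
  have hkL : 0 < k * Real.log (r_rich / r_poor) := mul_pos hk hL
  have hηpos : 0 < η :=
    lt_of_lt_of_le (div_pos (mul_pos hqo hsub) hkL) hηlo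
  -- qd < qo
  have hstep1 : qd < qo := by
    by_contra hcon
    push_neg at hcon
    have hqdpos : 0 < qd := lt_of_lt_of_le hqo hcon
    have h1 : qd < qd / η := by
      rw [lt_div_iff₀ hηpos]
      nlinarith
    have h2 : qo < qd / η := lt_of_le_of_lt hcon h1
    have e1 := gammaCDFReal_strict hk hrp hqo.le h2
    have e2 := gammaCDFReal_strict hk hrr hqo.le h2
    have e3 : gammaCDFReal k r_poor qo ≤ gammaCDFReal k r_poor qd :=
      (gammaCDFReal k r_poor).mono hcon
    have e4 : gammaCDFReal k r_rich qo ≤ gammaCDFReal k r_rich qd :=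
      (gammaCDFReal k r_rich).mono hcon
    nlinarith [mul_lt_mul_of_pos_left e1 hnapoor, mul_lt_mul_of_pos_left e2 hnarich,
      mul_le_mul_of_nonneg_left e3 hnbpoor.le, mul_le_mul_of_nonneg_left e4 hnbrich.le]
  -- qo < qd / η
  have hstep2 : qo < qd / η := by
    by_contra hcon
    push_neg at hcon
    have hqd' : qd ≤ qo * η := by
      rw [div_le_iff₀ hηpos] at hcon
      linarith
    have hqdlt : qd < qo := lt_of_le_of_lt hqd' (by nlinarith)
    have e1 : gammaCDFReal k r_poor (qd / η) ≤ gammaCDFReal k r_poor qo :=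
      (gammaCDFReal k r_poor).mono hcon
    have e2 : gammaCDFReal k r_rich (qd / η) ≤ gammaCDFReal k r_rich qo :=
      (gammaCDFReal k r_rich).mono hcon
    have e3 := gammaCDFReal_strict hk hrp hqd hqdlt
    have e4 := gammaCDFReal_strict hk hrr hqd hqdlt
    nlinarith [mul_le_mul_of_nonneg_left e1 hnapoor.le, mul_le_mul_of_nonneg_left e2 hnarich.le,
      mul_lt_mul_of_pos_left e3 hnbpoor, mul_lt_mul_of_pos_left e4 hnbrich]
  -- qd / η < qtil
  have hstep3 : qd / η < k * Real.log (r_rich / r_poor) / (r_rich - r_poor) := by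
    have h1 : qd / η < qo / η := by gcongr
    have h2 : qo / η ≤ k * Real.log (r_rich / r_poor) / (r_rich - r_poor) := by
      rw [div_le_div_iff₀ hηpos hsub]
      exact ((div_le_iff₀ hkL).mp hηlo).trans_eq (by ring)
    linarith
  -- the strict integral comparison
  have hdp := gammaCDFReal_sub hk hrp hstep2.le
  have hdr := gammaCDFReal_sub hk hrr hstep2.le
  have hip : IntegrableOn (gammaPDFReal k r_poor) (Ioc qo (qd / η)) :=
    (my_integrable_gammaPDFReal hk hrp).integrableOn
  have hir : IntegrableOn (gammaPDFReal k r_rich) (Ioc qo (qd / η)) :=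
    (my_integrable_gammaPDFReal hk hrr).integrableOn
  have hkey : 0 < ∫ t in Ioc qo (qd / η),
      (gammaPDFReal k r_rich - gammaPDFReal k r_poor) t := by
    have hptlt : ∀ t ∈ Ioc qo (qd / η),
        gammaPDFReal k r_poor t < gammaPDFReal k r_rich t := fun t ht =>
      gammaPDFReal_lt hk hrp hlt (hqo.trans ht.1) (lt_of_le_of_lt ht.2 hstep3)
    rw [setIntegral_pos_iff_support_of_nonneg_ae ?_ (hir.sub hip)]
    · have hsub' : Ioc qo (qd / η) ⊆
          Function.support (gammaPDFReal k r_rich - gammaPDFReal k r_poor)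
            ∩ Ioc qo (qd / η) := fun t ht =>
        ⟨(sub_pos.mpr (hptlt t ht)).ne', ht⟩
      calc (0 : ℝ≥0∞) < ENNReal.ofReal (qd / η - qo) := ENNReal.ofReal_pos.mpr (by linarith)
        _ = volume (Ioc qo (qd / η)) := (Real.volume_Ioc).symm
        _ ≤ _ := measure_mono hsub'
    · filter_upwards [ae_restrict_mem measurableSet_Ioc] with t ht
      exact sub_nonneg.mpr (hptlt t ht).le
  simp only [Pi.sub_apply] at hkey
  rw [integral_sub hir hip] at hkey
  linarith [hdp, hdr, hkey]
end

section
/- Let k > 0 and r_p, r_r > 0, and let F_poor = gammaCDFReal k r_p and F_rich = gammaCDFReal k r_r be Gamma CDFs with the same shape parameter k. If q_poor, q_rich > 0 satisfy F_poor(q_poor) = F_rich(q_rich), then r_p·q_poor = r_r·q_rich; equivalently, q_poor/q_rich = θ_poor/θ_rich where θ_poor = 1/r_p and θ_rich = 1/r_r are the scale parameters. -/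
open ProbabilityTheory

open MeasureTheory Real Set in
private lemma gammaPDFReal_scale {k r : ℝ} (hr : 0 < r) (t : ℝ) :
    gammaPDFReal k r t = r * gammaPDFReal k 1 (r * t) := by
  unfold gammaPDFReal
  by_cases ht : 0 ≤ t
  · have hrt : 0 ≤ r * t := mul_nonneg hr.le ht
    rw [if_pos ht, if_pos hrt, Real.one_rpow, Real.mul_rpow hr.le ht, one_mul,
      show r ^ (k - 1) = r ^ k / r ^ (1 : ℝ) from Real.rpow_sub hr k 1, Real.rpow_one]
    have hr0 : r ≠ 0 := hr.ne'
    field_simp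
  · have ht' : t < 0 := not_le.mp ht
    have hrt : ¬ (0 ≤ r * t) := not_le.mpr (mul_neg_of_pos_of_neg hr ht')
    rw [if_neg ht, if_neg hrt, mul_zero]

open MeasureTheory Real Set in
private lemma gammaPDFReal_integrable {k r : ℝ} (hk : 0 < k) (hr : 0 < r) :
    Integrable (gammaPDFReal k r) := by
  refine ⟨(measurable_gammaPDFReal k r).aestronglyMeasurable, ?_⟩
  rw [hasFiniteIntegral_iff_ofReal (ae_of_all _ (gammaPDFReal_nonneg hk hr))]
  have : ∫⁻ a, ENNReal.ofReal (gammaPDFReal k r a) = ∫⁻ a, gammaPDF k r a := rfl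
  rw [this, lintegral_gammaPDF_eq_one hk hr]
  exact ENNReal.one_lt_top

open MeasureTheory Real Set in
private lemma gammaCDFReal_eq_intervalIntegral {k r x : ℝ} (hk : 0 < k) (hr : 0 < r)
    (hx : 0 ≤ x) :
    gammaCDFReal k r x = ∫ t in (0:ℝ)..x, gammaPDFReal k r t := by
  rw [gammaCDFReal, cdf_gammaMeasure_eq_integral hk hr, intervalIntegral.integral_of_le hx,
    ← Set.Iic_union_Ioc_eq_Iic hx,
    setIntegral_union (Set.Iic_disjoint_Ioc le_rfl) measurableSet_Ioc
      ((gammaPDFReal_integrable hk hr).integrableOn)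
      ((gammaPDFReal_integrable hk hr).integrableOn)]
  have h0 : ∫ t in Set.Iic (0:ℝ), gammaPDFReal k r t = 0 := by
    apply setIntegral_eq_zero_of_ae_eq_zero
    have hne : ∀ᵐ t : ℝ, t ≠ 0 := by
      rw [ae_iff]
      simp [Real.volume_singleton]
    filter_upwards [hne] with t ht htle
    have : t < 0 := lt_of_le_of_ne htle ht
    simp [gammaPDFReal, not_le.mpr this]
  rw [h0, zero_add]

open MeasureTheory Real Set in
private lemma gammaCDFReal_scale {k r x : ℝ} (hk : 0 < k) (hr : 0 < r) (hx : 0 ≤ x) :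
    gammaCDFReal k r x = gammaCDFReal k 1 (r * x) := by
  rw [gammaCDFReal_eq_intervalIntegral hk hr hx,
    gammaCDFReal_eq_intervalIntegral hk one_pos (mul_nonneg hr.le hx)]
  simp_rw [gammaPDFReal_scale hr]
  rw [intervalIntegral.integral_const_mul,
    intervalIntegral.integral_comp_mul_left (gammaPDFReal k 1) hr.ne']
  rw [mul_zero, smul_eq_mul, ← mul_assoc, mul_inv_cancel₀ hr.ne', one_mul]

open MeasureTheory Real Set in
private lemma gammaCDFReal_strictMono {k a b : ℝ} (hk : 0 < k) (ha : 0 ≤ a) (hab : a < b) :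
    gammaCDFReal k 1 a < gammaCDFReal k 1 b := by
  rw [gammaCDFReal_eq_intervalIntegral hk one_pos ha,
    gammaCDFReal_eq_intervalIntegral hk one_pos (ha.trans hab.le)]
  have hadd : (∫ t in (0:ℝ)..a, gammaPDFReal k 1 t) + ∫ t in a..b, gammaPDFReal k 1 t
      = ∫ t in (0:ℝ)..b, gammaPDFReal k 1 t :=
    intervalIntegral.integral_add_adjacent_intervals
      ((gammaPDFReal_integrable hk one_pos).intervalIntegrable)
      ((gammaPDFReal_integrable hk one_pos).intervalIntegrable)
  have hpos : 0 < ∫ t in a..b, gammaPDFReal k 1 t := by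
    apply intervalIntegral.intervalIntegral_pos_of_pos_on
      ((gammaPDFReal_integrable hk one_pos).intervalIntegrable)
    · intro x hx
      exact gammaPDFReal_pos hk one_pos (lt_of_le_of_lt ha hx.1)
    · exact hab
  linarith

/-- Theorem 3 (second claim): when region-specific shape parameters coincide, the
region-specific top-percentage thresholds are in the same ratio as the scale parameters. -/
theorem top_percentage_threshold_ratio
    (k r_p r_r : ℝ) (hk : 0 < k) (hrp : 0 < r_p) (hrr : 0 < r_r)
    (qpoor qrich : ℝ) (hqpoor : 0 < qpoor) (hqrich : 0 < qrich)
    (heq : gammaCDFReal k r_p qpoor = gammaCDFReal k r_r qrich) :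
    r_p * qpoor = r_r * qrich := by
  rw [gammaCDFReal_scale hk hrp hqpoor.le, gammaCDFReal_scale hk hrr hqrich.le] at heq
  rcases lt_trichotomy (r_p * qpoor) (r_r * qrich) with h | h | h
  · exact absurd heq (ne_of_lt (gammaCDFReal_strictMono hk (mul_pos hrp hqpoor).le h))
  · exact h
  · exact absurd heq.symm (ne_of_lt (gammaCDFReal_strictMono hk (mul_pos hrr hqrich).le h))
end

section
/- Let F_poor = gammaCDFReal a_p r_p and F_rich = gammaCDFReal a_r r_r be Gamma CDFs (shapes a_p, a_r > 0, rates r_p, r_r > 0) with F_rich(q) ≥ F_poor(q) for all q ≥ 0. Let n_a, n_a' > 0, n = n_a + n_a', 0 < g < n, η ∈ [1, n/n_a), and η' = (n − η·n_a)/n_a'. Suppose q3, q2 ≥ 0 satisfy F_poor(q3) = g·η'/n and F_rich(q2) = g·η/n (the quota thresholds for non-URM applicants in the poor region and URM applicants in the rich region, respectively). If q3 ≥ q2, then there exists q > 0 with F_poor(q) > 0 and F_rich(q)/F_poor(q) ≥ η/η': whenever the quota-based admission does not impose a more competitive threshold on non-URM applicants from the poor region than on URM applicants from the rich region, the supremum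 over q > 0 of the ratio F_rich(q)/F_poor(q) is at least η/η' = n_a'·η/(n_a·(1−η) + n_a'). -/
open ProbabilityTheory MeasureTheory Set

lemma gammaCDFReal_zero {a r : ℝ} (ha : 0 < a) (hr : 0 < r) :
    gammaCDFReal a r 0 = 0 := by
  rw [gammaCDFReal, cdf_gammaMeasure_eq_lintegral ha hr]
  have h : ∫⁻ x in Iic (0:ℝ), gammaPDF a r x = ∫⁻ x in Iio (0:ℝ), gammaPDF a r x :=
    (setLIntegral_congr Iio_ae_eq_Iic).symm
  rw [h, setLIntegral_congr_fun measurableSet_Iio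
    (fun x (hx : x < 0) ↦ gammaPDF_of_neg hx), lintegral_zero]
  simp

/-- Theorem 1, necessary-condition form (equation (1)): if the quota-based admission does
not impose a more competitive threshold on non-URM applicants from the poor region than on
URM applicants from the rich region, then the CDF ratio `F_rich(q)/F_poor(q)` reaches
`η/η'` at some `q > 0`. -/
theorem quota_based_necessary_condition
    (a_p r_p a_r r_r : ℝ) (hap : 0 < a_p) (hrp : 0 < r_p) (har : 0 < a_r) (hrr : 0 < r_r)
    (hdom : ∀ q : ℝ, 0 ≤ q → gammaCDFReal a_p r_p q ≤ gammaCDFReal a_r r_r q)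
    (na na' n g : ℝ) (hna : 0 < na) (hna' : 0 < na') (hn : n = na + na')
    (hg0 : 0 < g) (hgn : g < n)
    (η : ℝ) (hη1 : 1 ≤ η) (hη2 : η < n / na)
    (η' : ℝ) (hη' : η' = (n - η * na) / na')
    (q3 q2 : ℝ) (hq3 : 0 ≤ q3) (hq2 : 0 ≤ q2)
    (heq3 : gammaCDFReal a_p r_p q3 = g * η' / n)
    (heq2 : gammaCDFReal a_r r_r q2 = g * η / n)
    (hge : q3 ≥ q2) :
    ∃ q : ℝ, 0 < q ∧ 0 < gammaCDFReal a_p r_p q ∧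
      gammaCDFReal a_r r_r q / gammaCDFReal a_p r_p q ≥ η / η' := by
  have hn0 : 0 < n := by nlinarith
  have hηna : η * na < n := by
    have := (lt_div_iff₀ hna).mp hη2; linarith
  have hη'pos : 0 < η' := by
    rw [hη']; exact div_pos (by linarith) hna'
  have hηpos : 0 < η := lt_of_lt_of_le one_pos hη1
  have hFp3 : 0 < gammaCDFReal a_p r_p q3 := by
    rw [heq3]; positivity
  have hq3pos : 0 < q3 := by
    rcases hq3.lt_or_eq with h | h
    · exact h
    · exfalso; rw [← h, gammaCDFReal_zero hap hrp] at hFp3; exact lt_irrefl 0 hFp3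
  refine ⟨q3, hq3pos, hFp3, ?_⟩
  have hmono : gammaCDFReal a_r r_r q2 ≤ gammaCDFReal a_r r_r q3 :=
    (gammaCDFReal a_r r_r).mono hge
  have hFr3 : g * η / n ≤ gammaCDFReal a_r r_r q3 := heq2 ▸ hmono
  rw [heq3, ge_iff_le]
  calc η / η' = (g * η / n) / (g * η' / n) := by
        field_simp
    _ ≤ gammaCDFReal a_r r_r q3 / (g * η' / n) := by gcongr
end
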